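/- Let H be a commutative Hopf algebra over a commutative ring R with a Poisson Hopf algebra structure p, and let τ : H ⊗ H → H ⊗ H be the associated map. Then τ is a biderivation with respect to the commutative R-algebra structure of H ⊗ H: for all a, b, c ∈ H, τ((ab) ⊗ c) = (a ⊗ 1)·τ(b ⊗ c) + (b ⊗ 1)·τ(a ⊗ c) and τ(a ⊗ (bc)) = (1 ⊗ b)·τ(a ⊗ c) + (1 ⊗ c)·τ(a ⊗ b), where · denotes multiplication in the algebra H ⊗ H. -/

import Mathlib

open TensorProduct LinearMap

/-- A Poisson Hopf algebra structure on a commutative Hopf algebra `H` over `R`: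
an `R`-bilinear bracket `p` which is a biderivation, antisymmetric, satisfies the
Jacobi identity, and is compatible with the comultiplication
(`Δ(p(a,b)) = p(a₁,b₁) ⊗ a₂b₂ + a₁b₁ ⊗ p(a₂,b₂)`). -/
structure PoissonHopfStr (R H : Type*) [CommRing R] [CommRing H] [HopfAlgebra R H] where
  p : H →ₗ[R] H →ₗ[R] H
  leibniz_left : ∀ a b c : H, p (a * b) c = a * p b c + p a c * b
  leibniz_right : ∀ a b c : H, p a (b * c) = p a b * c + b * p a c
  antisymm : ∀ a b : H, p a b + p b a = 0
  jacobi : ∀ a b c : H, p a (p b c) = p (p a b) c + p b (p a c)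
  compat : (Coalgebra.comul (R := R) (A := H)) ∘ₗ TensorProduct.lift p =
    (TensorProduct.map (TensorProduct.lift p) (LinearMap.mul' R H)
      + TensorProduct.map (LinearMap.mul' R H) (TensorProduct.lift p)) ∘ₗ
      (TensorProduct.tensorTensorTensorComm R H H H H).toLinearMap ∘ₗ
      TensorProduct.map (Coalgebra.comul (R := R)) (Coalgebra.comul (R := R))

namespace PoissonHopfStr

variable {R H : Type*} [CommRing R] [CommRing H] [HopfAlgebra R H]

/-- The operation `a ◁ b := p(a, b₍₁₎) · S(b₍₂₎)`, as a linear map `H ⊗ H →ₗ H`. -/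
noncomputable def tri (P : PoissonHopfStr R H) : H ⊗[R] H →ₗ[R] H :=
  LinearMap.mul' R H ∘ₗ
    TensorProduct.map (TensorProduct.lift P.p) (HopfAlgebra.antipode (R := R)) ∘ₗ
    (TensorProduct.assoc R H H H).symm.toLinearMap ∘ₗ
    LinearMap.lTensor H (Coalgebra.comul (R := R))

/-- The map `r(a ⊗ b) = −(a ◁ b₍₁₎) ⊗ b₍₂₎`. -/
noncomputable def rmap (P : PoissonHopfStr R H) : H ⊗[R] H →ₗ[R] H ⊗[R] H :=
  - (LinearMap.rTensor H P.tri ∘ₗ (TensorProduct.assoc R H H H).symm.toLinearMap ∘ₗ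
      LinearMap.lTensor H (Coalgebra.comul (R := R)))

/-- `τ := r + σ ∘ r ∘ σ`. -/
noncomputable def tau (P : PoissonHopfStr R H) : H ⊗[R] H →ₗ[R] H ⊗[R] H :=
  P.rmap + (TensorProduct.comm R H H).toLinearMap ∘ₗ P.rmap ∘ₗ
    (TensorProduct.comm R H H).toLinearMap


end PoissonHopfStr

open scoped TensorProduct

section Aux

open Coalgebra HopfAlgebra

variable {R H : Type*} [CommRing R] [CommRing H] [HopfAlgebra R H]

/-- Product of two comultiplication representations. -/
noncomputable def reprMul {ι κ : Type*} {a b : H} (ra : Repr R a ι) (rb : Repr R b κ) :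
    Repr R (a * b) (ι × κ) where
  index := ra.index ×ˢ rb.index
  left := fun q => ra.left q.1 * rb.left q.2
  right := fun q => ra.right q.1 * rb.right q.2
  eq := by
    rw [Bialgebra.comul_mul, ← ra.eq, ← rb.eq, Finset.sum_mul_sum]
    rw [Finset.sum_product]
    simp [Algebra.TensorProduct.tmul_mul_tmul]

lemma repr_counit_left {ι : Type*} {a : H} (r : Repr R a ι) :
    ∑ i ∈ r.index, counit (R := R) (r.left i) • r.right i = a := by
  have h2 := congrArg (TensorProduct.lid R H) (Coalgebra.sum_counit_tmul_eq (R := R) r)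
  rw [map_sum] at h2
  simp only [TensorProduct.lid_tmul, one_smul] at h2
  exact h2

lemma repr_counit_right {ι : Type*} {a : H} (r : Repr R a ι) :
    ∑ i ∈ r.index, counit (R := R) (r.right i) • r.left i = a := by
  have h2 := congrArg (TensorProduct.rid R H) (Coalgebra.sum_tmul_counit_eq (R := R) r)
  rw [map_sum] at h2
  simp only [TensorProduct.rid_tmul, one_smul] at h2
  exact h2

noncomputable def aux3 (f g h : H →ₗ[R] H) : H ⊗[R] (H ⊗[R] H) →ₗ[R] H :=
  LinearMap.mul' R H ∘ₗ TensorProduct.map f (LinearMap.mul' R H ∘ₗ TensorProduct.map g h)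

lemma aux3_tmul (f g h : H →ₗ[R] H) (x y z : H) :
    aux3 f g h (x ⊗ₜ[R] (y ⊗ₜ[R] z)) = f x * (g y * h z) := by
  simp [aux3]

lemma sum_reorder4 {α β γ δ M : Type*} [AddCommMonoid M] (J : Finset α) (L : α → Finset β)
    (I : Finset γ) (K : γ → Finset δ) (F : α → β → γ → δ → M) :
    ∑ j ∈ J, ∑ l ∈ L j, ∑ i ∈ I, ∑ k ∈ K i, F j l i k
      = ∑ i ∈ I, ∑ k ∈ K i, ∑ j ∈ J, ∑ l ∈ L j, F j l i k := by
  rw [Finset.sum_sigma' J L, Finset.sum_sigma' I K]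
  simp_rw [Finset.sum_sigma' I K, Finset.sum_sigma' J L]
  exact Finset.sum_comm

lemma repr_assoc_transfer {ι : Type*} {κ Λ : ι → Type*} {a : H} (r : Repr R a ι)
    (r1 : ∀ i, Repr R (r.left i) (κ i))
    (r2 : ∀ i, Repr R (r.right i) (Λ i)) (φ : H ⊗[R] (H ⊗[R] H) →ₗ[R] H) :
    ∑ i ∈ r.index, ∑ k ∈ (r2 i).index,
      φ (r.left i ⊗ₜ[R] ((r2 i).left k ⊗ₜ[R] (r2 i).right k))
      = ∑ i ∈ r.index, ∑ k ∈ (r1 i).index,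
      φ ((r1 i).left k ⊗ₜ[R] ((r1 i).right k ⊗ₜ[R] r.right i)) := by
  have h2 := congrArg φ (Coalgebra.sum_tmul_tmul_eq r r1 r2)
  simpa only [map_sum] using h2.symm

lemma sum_counit_right_apply {ι : Type*} {a : H} (r : Repr R a ι) (L : H →ₗ[R] H) :
    ∑ i ∈ r.index, counit (R := R) (r.right i) • L (r.left i) = L a := by
  simp_rw [← map_smul]
  rw [← map_sum, repr_counit_right]

lemma sum_counit_left_apply {ι : Type*} {a : H} (r : Repr R a ι) (L : H →ₗ[R] H) :
    ∑ i ∈ r.index, counit (R := R) (r.left i) • L (r.right i) = L a := by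
  simp_rw [← map_smul]
  rw [← map_sum, repr_counit_left]

/-- The antipode of a commutative Hopf algebra is multiplicative. -/
lemma antipode_mul_comm (a b : H) :
    antipode (R := R) (a * b) = antipode (R := R) a * antipode (R := R) b := by
  classical
  set ra : Repr R a (H × H) := ℛ R a with hra
  set rb : Repr R b (H × H) := ℛ R b with hrb
  set ra1 : ∀ i : ra.ι, Repr R (ra.left i) (H × H) := fun i => ℛ R (ra.left i) with hra1
  set ra2 : ∀ i : ra.ι, Repr R (ra.right i) (H × H) := fun i => ℛ R (ra.right i) with hra2
  set rb1 : ∀ j : rb.ι, Repr R (rb.left j) (H × H) := fun j => ℛ R (rb.left j) with hrb1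
  set rb2 : ∀ j : rb.ι, Repr R (rb.right j) (H × H) := fun j => ℛ R (rb.right j) with hrb2
  have claim1 :
      (∑ j ∈ rb.index, ∑ l ∈ (rb2 j).index, ∑ i ∈ ra.index, ∑ k ∈ (ra2 i).index,
        antipode (R := R) (ra.left i * rb.left j) *
          (((ra2 i).left k * (rb2 j).left l) *
            (antipode (R := R) ((rb2 j).right l) * antipode (R := R) ((ra2 i).right k))))
        = antipode (R := R) (a * b) := by
    calc (∑ j ∈ rb.index, ∑ l ∈ (rb2 j).index, ∑ i ∈ ra.index, ∑ k ∈ (ra2 i).index,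
        antipode (R := R) (ra.left i * rb.left j) *
          (((ra2 i).left k * (rb2 j).left l) *
            (antipode (R := R) ((rb2 j).right l) * antipode (R := R) ((ra2 i).right k))))
        = ∑ j ∈ rb.index, ∑ l ∈ (rb2 j).index,
            antipode (R := R) (a * rb.left j) *
              ((rb2 j).left l * antipode (R := R) ((rb2 j).right l)) := by
          refine Finset.sum_congr rfl fun j _ => Finset.sum_congr rfl fun l _ => ?_
          have step_i : ∀ i ∈ ra.index,
              (∑ k ∈ (ra2 i).index,
                antipode (R := R) (ra.left i * rb.left j) *
                  (((ra2 i).left k * (rb2 j).left l) *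
                    (antipode (R := R) ((rb2 j).right l) *
                      antipode (R := R) ((ra2 i).right k))))
              = counit (R := R) (ra.right i) •
                  (antipode (R := R) (ra.left i * rb.left j) *
                    ((rb2 j).left l * antipode (R := R) ((rb2 j).right l))) := by
            intro i _
            calc (∑ k ∈ (ra2 i).index,
                antipode (R := R) (ra.left i * rb.left j) *
                  (((ra2 i).left k * (rb2 j).left l) *
                    (antipode (R := R) ((rb2 j).right l) *
                      antipode (R := R) ((ra2 i).right k))))
                = (antipode (R := R) (ra.left i * rb.left j) *
                    ((rb2 j).left l * antipode (R := R) ((rb2 j).right l))) *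
                    ∑ k ∈ (ra2 i).index,
                      ((ra2 i).left k * antipode (R := R) ((ra2 i).right k)) := by
                  rw [Finset.mul_sum]
                  exact Finset.sum_congr rfl fun k _ => by ring
              _ = _ := by
                  rw [sum_mul_antipode_eq_smul (ra2 i), mul_smul_comm, mul_one]
          rw [Finset.sum_congr rfl step_i]
          have h := sum_counit_right_apply ra
            ((LinearMap.mulRight R
                ((rb2 j).left l * antipode (R := R) ((rb2 j).right l))) ∘ₗ
              (antipode (R := R) : H →ₗ[R] H) ∘ₗ LinearMap.mulRight R (rb.left j))
          simpa only [LinearMap.comp_apply, LinearMap.mulRight_apply] using h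
      _ = ∑ j ∈ rb.index, counit (R := R) (rb.right j) • antipode (R := R) (a * rb.left j) := by
          refine Finset.sum_congr rfl fun j _ => ?_
          rw [← Finset.mul_sum, sum_mul_antipode_eq_smul (rb2 j), mul_smul_comm, mul_one]
      _ = antipode (R := R) (a * b) := by
          have h := sum_counit_right_apply rb
            ((antipode (R := R) : H →ₗ[R] H) ∘ₗ LinearMap.mulLeft R a)
          simpa only [LinearMap.comp_apply, LinearMap.mulLeft_apply] using h
  have claim_t :
      (∑ j ∈ rb.index, ∑ l ∈ (rb2 j).index, ∑ i ∈ ra.index, ∑ k ∈ (ra2 i).index,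
        antipode (R := R) (ra.left i * rb.left j) *
          (((ra2 i).left k * (rb2 j).left l) *
            (antipode (R := R) ((rb2 j).right l) * antipode (R := R) ((ra2 i).right k))))
        = ∑ i ∈ ra.index, ∑ k ∈ (ra1 i).index, ∑ j ∈ rb.index, ∑ l ∈ (rb1 j).index,
        antipode (R := R) ((ra1 i).left k * (rb1 j).left l) *
          (((ra1 i).right k * (rb1 j).right l) *
            (antipode (R := R) (rb.right j) * antipode (R := R) (ra.right i))) := by
    calc (∑ j ∈ rb.index, ∑ l ∈ (rb2 j).index, ∑ i ∈ ra.index, ∑ k ∈ (ra2 i).index,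
        antipode (R := R) (ra.left i * rb.left j) *
          (((ra2 i).left k * (rb2 j).left l) *
            (antipode (R := R) ((rb2 j).right l) * antipode (R := R) ((ra2 i).right k))))
        = ∑ j ∈ rb.index, ∑ l ∈ (rb2 j).index, ∑ i ∈ ra.index, ∑ k ∈ (ra1 i).index,
            antipode (R := R) ((ra1 i).left k * rb.left j) *
              (((ra1 i).right k * (rb2 j).left l) *
                (antipode (R := R) ((rb2 j).right l) * antipode (R := R) (ra.right i))) := by
          refine Finset.sum_congr rfl fun j _ => Finset.sum_congr rfl fun l _ => ?_
          have h := repr_assoc_transfer ra ra1 ra2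
            (aux3 ((antipode (R := R) : H →ₗ[R] H) ∘ₗ LinearMap.mulRight R (rb.left j))
                  (LinearMap.mulRight R ((rb2 j).left l))
                  (LinearMap.mulLeft R (antipode (R := R) ((rb2 j).right l)) ∘ₗ
                    (antipode (R := R) : H →ₗ[R] H)))
          simpa only [aux3_tmul, LinearMap.comp_apply, LinearMap.mulRight_apply,
            LinearMap.mulLeft_apply] using h
      _ = ∑ i ∈ ra.index, ∑ k ∈ (ra1 i).index, ∑ j ∈ rb.index, ∑ l ∈ (rb2 j).index,
            antipode (R := R) ((ra1 i).left k * rb.left j) *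
              (((ra1 i).right k * (rb2 j).left l) *
                (antipode (R := R) ((rb2 j).right l) * antipode (R := R) (ra.right i))) :=
          sum_reorder4 _ _ _ _ _
      _ = ∑ i ∈ ra.index, ∑ k ∈ (ra1 i).index, ∑ j ∈ rb.index, ∑ l ∈ (rb1 j).index,
            antipode (R := R) ((ra1 i).left k * (rb1 j).left l) *
              (((ra1 i).right k * (rb1 j).right l) *
                (antipode (R := R) (rb.right j) * antipode (R := R) (ra.right i))) := by
          refine Finset.sum_congr rfl fun i _ => Finset.sum_congr rfl fun k _ => ?_
          have h := repr_assoc_transfer rb rb1 rb2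
            (aux3 ((antipode (R := R) : H →ₗ[R] H) ∘ₗ LinearMap.mulLeft R ((ra1 i).left k))
                  (LinearMap.mulLeft R ((ra1 i).right k))
                  (LinearMap.mulRight R (antipode (R := R) (ra.right i)) ∘ₗ
                    (antipode (R := R) : H →ₗ[R] H)))
          simpa only [aux3_tmul, LinearMap.comp_apply, LinearMap.mulRight_apply,
            LinearMap.mulLeft_apply] using h
  have claim2 :
      (∑ i ∈ ra.index, ∑ k ∈ (ra1 i).index, ∑ j ∈ rb.index, ∑ l ∈ (rb1 j).index,
        antipode (R := R) ((ra1 i).left k * (rb1 j).left l) *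
          (((ra1 i).right k * (rb1 j).right l) *
            (antipode (R := R) (rb.right j) * antipode (R := R) (ra.right i))))
        = antipode (R := R) a * antipode (R := R) b := by
    calc (∑ i ∈ ra.index, ∑ k ∈ (ra1 i).index, ∑ j ∈ rb.index, ∑ l ∈ (rb1 j).index,
        antipode (R := R) ((ra1 i).left k * (rb1 j).left l) *
          (((ra1 i).right k * (rb1 j).right l) *
            (antipode (R := R) (rb.right j) * antipode (R := R) (ra.right i))))
        = ∑ i ∈ ra.index, ∑ j ∈ rb.index, ∑ k ∈ (ra1 i).index, ∑ l ∈ (rb1 j).index,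
            antipode (R := R) ((ra1 i).left k * (rb1 j).left l) *
              (((ra1 i).right k * (rb1 j).right l) *
                (antipode (R := R) (rb.right j) * antipode (R := R) (ra.right i))) :=
          Finset.sum_congr rfl fun i _ => Finset.sum_comm
      _ = ∑ i ∈ ra.index, ∑ j ∈ rb.index,
            (counit (R := R) (ra.left i) * counit (R := R) (rb.left j)) •
              (antipode (R := R) (rb.right j) * antipode (R := R) (ra.right i)) := by
          refine Finset.sum_congr rfl fun i _ => Finset.sum_congr rfl fun j _ => ?_
          have hm := sum_antipode_mul_eq_smul (R := R) (reprMul (ra1 i) (rb1 j))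
          simp only [reprMul] at hm
          rw [Finset.sum_product] at hm
          calc (∑ k ∈ (ra1 i).index, ∑ l ∈ (rb1 j).index,
              antipode (R := R) ((ra1 i).left k * (rb1 j).left l) *
                (((ra1 i).right k * (rb1 j).right l) *
                  (antipode (R := R) (rb.right j) * antipode (R := R) (ra.right i))))
              = (∑ k ∈ (ra1 i).index, ∑ l ∈ (rb1 j).index,
                  antipode (R := R) ((ra1 i).left k * (rb1 j).left l) *
                    ((ra1 i).right k * (rb1 j).right l)) *
                  (antipode (R := R) (rb.right j) * antipode (R := R) (ra.right i)) := by
                rw [Finset.sum_mul]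
                refine Finset.sum_congr rfl fun k _ => ?_
                rw [Finset.sum_mul]
                exact Finset.sum_congr rfl fun l _ => by ring
            _ = (counit (R := R) (ra.left i * rb.left j) • (1 : H)) *
                  (antipode (R := R) (rb.right j) * antipode (R := R) (ra.right i)) := by
                rw [hm]
            _ = _ := by
                rw [Bialgebra.counit_mul, smul_mul_assoc, one_mul]
      _ = ∑ i ∈ ra.index, counit (R := R) (ra.left i) •
            ((∑ j ∈ rb.index, counit (R := R) (rb.left j) •
              antipode (R := R) (rb.right j)) * antipode (R := R) (ra.right i)) := by
          refine Finset.sum_congr rfl fun i _ => ?_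
          rw [Finset.sum_mul, Finset.smul_sum]
          refine Finset.sum_congr rfl fun j _ => ?_
          rw [mul_smul, smul_mul_assoc, mul_comm (antipode (R := R) (rb.right j))]
      _ = antipode (R := R) a * antipode (R := R) b := by
          rw [sum_counit_left_apply rb ((antipode (R := R) : H →ₗ[R] H))]
          have h := sum_counit_left_apply ra
            (LinearMap.mulLeft R (antipode (R := R) b) ∘ₗ (antipode (R := R) : H →ₗ[R] H))
          simp only [LinearMap.comp_apply, LinearMap.mulLeft_apply] at h
          rw [h, mul_comm]
  rw [← claim1, claim_t, claim2]

/-- `∑ x₁ S(x₂) ⊗ x₃ = 1 ⊗ x`. -/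
lemma collapse_one_tmul {ι κ : Type*} {a : H} (r : Repr R a ι)
    (r1 : ∀ i, Repr R (r.left i) κ) :
    ∑ i ∈ r.index, ∑ k ∈ (r1 i).index,
      ((r1 i).left k * antipode (R := R) ((r1 i).right k)) ⊗ₜ[R] r.right i
      = (1 : H) ⊗ₜ[R] a := by
  have step : ∀ i ∈ r.index,
      ∑ k ∈ (r1 i).index,
        ((r1 i).left k * antipode (R := R) ((r1 i).right k)) ⊗ₜ[R] r.right i
      = counit (R := R) (r.left i) • ((1 : H) ⊗ₜ[R] r.right i) := by
    intro i _
    rw [← TensorProduct.sum_tmul, sum_mul_antipode_eq_smul (r1 i), TensorProduct.smul_tmul']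
  rw [Finset.sum_congr rfl step]
  simp_rw [← TensorProduct.tmul_smul, ← TensorProduct.tmul_sum]
  rw [repr_counit_left r]

end Aux

namespace PoissonHopfStr

open Coalgebra HopfAlgebra

variable {R H : Type*} [CommRing R] [CommRing H] [HopfAlgebra R H] (P : PoissonHopfStr R H)

lemma tri_repr (x : H) {ι : Type*} {y : H} (ry : Repr R y ι) :
    P.tri (x ⊗ₜ[R] y)
      = ∑ i ∈ ry.index, P.p x (ry.left i) * antipode (R := R) (ry.right i) := by
  rw [tri]
  simp only [LinearMap.comp_apply, lTensor_tmul, ← ry.eq, tmul_sum, map_sum]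
  simp [TensorProduct.assoc_symm_tmul]

lemma rmap_repr (x : H) {ι : Type*} {y : H} (ry : Repr R y ι) :
    P.rmap (x ⊗ₜ[R] y)
      = - ∑ i ∈ ry.index, P.tri (x ⊗ₜ[R] ry.left i) ⊗ₜ[R] ry.right i := by
  rw [rmap]
  simp only [LinearMap.neg_apply, LinearMap.comp_apply, lTensor_tmul, ← ry.eq, tmul_sum, map_sum]
  simp [TensorProduct.assoc_symm_tmul]

lemma tau_tmul (x y : H) :
    P.tau (x ⊗ₜ[R] y)
      = P.rmap (x ⊗ₜ[R] y) + TensorProduct.comm R H H (P.rmap (y ⊗ₜ[R] x)) := by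
  rw [tau]
  simp only [LinearMap.add_apply, LinearMap.comp_apply, LinearEquiv.coe_coe,
    TensorProduct.comm_tmul]

lemma tri_mul_left (a b y : H) :
    P.tri ((a * b) ⊗ₜ[R] y) = a * P.tri (b ⊗ₜ[R] y) + b * P.tri (a ⊗ₜ[R] y) := by
  classical
  set ry := ℛ R y
  rw [P.tri_repr (a * b) ry, P.tri_repr a ry, P.tri_repr b ry,
    Finset.mul_sum, Finset.mul_sum, ← Finset.sum_add_distrib]
  refine Finset.sum_congr rfl fun i _ => ?_
  rw [P.leibniz_left]
  ring

lemma rmap_mul_left (a b c : H) :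
    P.rmap ((a * b) ⊗ₜ[R] c)
      = (a ⊗ₜ[R] (1 : H)) * P.rmap (b ⊗ₜ[R] c) + (b ⊗ₜ[R] (1 : H)) * P.rmap (a ⊗ₜ[R] c) := by
  classical
  set rc := ℛ R c
  rw [P.rmap_repr (a * b) rc, P.rmap_repr a rc, P.rmap_repr b rc, mul_neg, mul_neg,
    Finset.mul_sum, Finset.mul_sum, ← neg_add, neg_inj, ← Finset.sum_add_distrib]
  refine Finset.sum_congr rfl fun i _ => ?_
  rw [P.tri_mul_left, TensorProduct.add_tmul, Algebra.TensorProduct.tmul_mul_tmul,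
    Algebra.TensorProduct.tmul_mul_tmul]
  simp only [one_mul]

lemma rmap_mul_right (a b c : H) :
    P.rmap (c ⊗ₜ[R] (a * b))
      = ((1 : H) ⊗ₜ[R] b) * P.rmap (c ⊗ₜ[R] a) + ((1 : H) ⊗ₜ[R] a) * P.rmap (c ⊗ₜ[R] b) := by
  classical
  set ra : Repr R a (H × H) := ℛ R a with hra
  set rb : Repr R b (H × H) := ℛ R b with hrb
  set ra1 : ∀ i : ra.ι, Repr R (ra.left i) (H × H) := fun i => ℛ R (ra.left i) with hra1
  set rb1 : ∀ j : rb.ι, Repr R (rb.left j) (H × H) := fun j => ℛ R (rb.left j) with hrb1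
  have hXA : P.rmap (c ⊗ₜ[R] a)
      = - ∑ i ∈ ra.index, ∑ k ∈ (ra1 i).index,
          (P.p c ((ra1 i).left k) * antipode (R := R) ((ra1 i).right k)) ⊗ₜ[R] ra.right i := by
    rw [P.rmap_repr c ra, neg_inj]
    refine Finset.sum_congr rfl fun i _ => ?_
    rw [P.tri_repr c (ra1 i), TensorProduct.sum_tmul]
  have hXB : P.rmap (c ⊗ₜ[R] b)
      = - ∑ j ∈ rb.index, ∑ l ∈ (rb1 j).index,
          (P.p c ((rb1 j).left l) * antipode (R := R) ((rb1 j).right l)) ⊗ₜ[R] rb.right j := by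
    rw [P.rmap_repr c rb, neg_inj]
    refine Finset.sum_congr rfl fun j _ => ?_
    rw [P.tri_repr c (rb1 j), TensorProduct.sum_tmul]
  have hYB : (∑ j ∈ rb.index, ∑ l ∈ (rb1 j).index,
      ((rb1 j).left l * antipode (R := R) ((rb1 j).right l)) ⊗ₜ[R] rb.right j)
      = (1 : H) ⊗ₜ[R] b := collapse_one_tmul rb rb1
  have hYA : (∑ i ∈ ra.index, ∑ k ∈ (ra1 i).index,
      ((ra1 i).left k * antipode (R := R) ((ra1 i).right k)) ⊗ₜ[R] ra.right i)
      = (1 : H) ⊗ₜ[R] a := collapse_one_tmul ra ra1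
  calc P.rmap (c ⊗ₜ[R] (a * b))
      = - ∑ q ∈ ra.index ×ˢ rb.index,
          P.tri (c ⊗ₜ[R] (ra.left q.1 * rb.left q.2)) ⊗ₜ[R]
            (ra.right q.1 * rb.right q.2) := by
        rw [P.rmap_repr c (reprMul ra rb)]
        simp only [reprMul]
    _ = - ∑ i ∈ ra.index, ∑ j ∈ rb.index,
          P.tri (c ⊗ₜ[R] (ra.left i * rb.left j)) ⊗ₜ[R]
            (ra.right i * rb.right j) := by rw [Finset.sum_product]
    _ = - ∑ i ∈ ra.index, ∑ j ∈ rb.index,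
          ((∑ k ∈ (ra1 i).index,
              (P.p c ((ra1 i).left k) * antipode (R := R) ((ra1 i).right k)) ⊗ₜ[R] ra.right i) *
            (∑ l ∈ (rb1 j).index,
              ((rb1 j).left l * antipode (R := R) ((rb1 j).right l)) ⊗ₜ[R] rb.right j)
          + (∑ k ∈ (ra1 i).index,
              (((ra1 i).left k * antipode (R := R) ((ra1 i).right k)) ⊗ₜ[R] ra.right i)) *
            (∑ l ∈ (rb1 j).index,
              (P.p c ((rb1 j).left l) * antipode (R := R) ((rb1 j).right l)) ⊗ₜ[R] rb.right j)) := by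
        rw [neg_inj]
        refine Finset.sum_congr rfl fun i _ => Finset.sum_congr rfl fun j _ => ?_
        rw [P.tri_repr c (reprMul (ra1 i) (rb1 j))]
        simp only [reprMul]
        rw [Finset.sum_product]
        simp_rw [TensorProduct.sum_tmul]
        rw [Finset.sum_mul_sum, Finset.sum_mul_sum, ← Finset.sum_add_distrib]
        refine Finset.sum_congr rfl fun k _ => ?_
        rw [← Finset.sum_add_distrib]
        refine Finset.sum_congr rfl fun l _ => ?_
        have hterm : P.p c ((ra1 i).left k * (rb1 j).left l) *
            antipode (R := R) ((ra1 i).right k * (rb1 j).right l)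
            = (P.p c ((ra1 i).left k) * antipode (R := R) ((ra1 i).right k)) *
                ((rb1 j).left l * antipode (R := R) ((rb1 j).right l))
              + ((ra1 i).left k * antipode (R := R) ((ra1 i).right k)) *
                (P.p c ((rb1 j).left l) * antipode (R := R) ((rb1 j).right l)) := by
          rw [P.leibniz_right, antipode_mul_comm]
          ring
        rw [hterm, TensorProduct.add_tmul, Algebra.TensorProduct.tmul_mul_tmul,
          Algebra.TensorProduct.tmul_mul_tmul]
    _ = - ((∑ i ∈ ra.index, ∑ k ∈ (ra1 i).index,
            (P.p c ((ra1 i).left k) * antipode (R := R) ((ra1 i).right k)) ⊗ₜ[R] ra.right i) *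
          (∑ j ∈ rb.index, ∑ l ∈ (rb1 j).index,
            ((rb1 j).left l * antipode (R := R) ((rb1 j).right l)) ⊗ₜ[R] rb.right j)
        + (∑ i ∈ ra.index, ∑ k ∈ (ra1 i).index,
            ((ra1 i).left k * antipode (R := R) ((ra1 i).right k)) ⊗ₜ[R] ra.right i) *
          (∑ j ∈ rb.index, ∑ l ∈ (rb1 j).index,
            (P.p c ((rb1 j).left l) * antipode (R := R) ((rb1 j).right l)) ⊗ₜ[R] rb.right j)) := by
        rw [neg_inj, Finset.sum_mul_sum, Finset.sum_mul_sum, ← Finset.sum_add_distrib]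
        refine Finset.sum_congr rfl fun i _ => ?_
        rw [← Finset.sum_add_distrib]
    _ = - ((- P.rmap (c ⊗ₜ[R] a)) * ((1 : H) ⊗ₜ[R] b)
          + ((1 : H) ⊗ₜ[R] a) * (- P.rmap (c ⊗ₜ[R] b))) := by
        rw [hXA, hXB, neg_neg, neg_neg, hYA, hYB]
    _ = ((1 : H) ⊗ₜ[R] b) * P.rmap (c ⊗ₜ[R] a) + ((1 : H) ⊗ₜ[R] a) * P.rmap (c ⊗ₜ[R] b) := by
        ring

lemma comm_mul_left (b : H) (u : H ⊗[R] H) :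
    TensorProduct.comm R H H (((1 : H) ⊗ₜ[R] b) * u)
      = (b ⊗ₜ[R] (1 : H)) * TensorProduct.comm R H H u := by
  induction u using TensorProduct.induction_on with
  | zero => simp
  | tmul x y => simp [Algebra.TensorProduct.tmul_mul_tmul]
  | add u v hu hv => rw [mul_add, map_add, hu, hv, map_add, mul_add]

lemma comm_mul_right (b : H) (u : H ⊗[R] H) :
    TensorProduct.comm R H H ((b ⊗ₜ[R] (1 : H)) * u)
      = ((1 : H) ⊗ₜ[R] b) * TensorProduct.comm R H H u := by
  induction u using TensorProduct.induction_on with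
  | zero => simp
  | tmul x y => simp [Algebra.TensorProduct.tmul_mul_tmul]
  | add u v hu hv => rw [mul_add, map_add, hu, hv, map_add, mul_add]

end PoissonHopfStr


/-- STATEMENT 10: `τ` is a biderivation with respect to the commutative `R`-algebra
structure of `H ⊗[R] H`. -/
theorem tau_biderivation {R H : Type*} [CommRing R] [CommRing H] [HopfAlgebra R H]
    (P : PoissonHopfStr R H) :
    (∀ a b c : H,
      P.tau ((a * b) ⊗ₜ[R] c)
        = (a ⊗ₜ[R] (1 : H)) * P.tau (b ⊗ₜ[R] c) + (b ⊗ₜ[R] (1 : H)) * P.tau (a ⊗ₜ[R] c)) ∧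
    (∀ a b c : H,
      P.tau (a ⊗ₜ[R] (b * c))
        = ((1 : H) ⊗ₜ[R] b) * P.tau (a ⊗ₜ[R] c) + ((1 : H) ⊗ₜ[R] c) * P.tau (a ⊗ₜ[R] b)) := by
  constructor
  · intro a b c
    rw [P.tau_tmul (a * b) c, P.tau_tmul b c, P.tau_tmul a c,
      P.rmap_mul_left a b c, P.rmap_mul_right a b c, map_add,
      PoissonHopfStr.comm_mul_left b, PoissonHopfStr.comm_mul_left a]
    ring
  · intro a b c
    rw [P.tau_tmul a (b * c), P.tau_tmul a c, P.tau_tmul a b,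
      P.rmap_mul_right b c a, P.rmap_mul_left b c a, map_add,
      PoissonHopfStr.comm_mul_right b, PoissonHopfStr.comm_mul_right c]
    ring
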